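/- arXiv:2502.00799 — 7 statements merged into one kernel-verified Lean document; each statement's English description precedes it below -/
import Mathlib

section
/- Let Δ be a hypergraph on [d] (a collection of subsets, none containing another) all of whose edges have size at least 3, and let F be a finite set of 'forbidden pairs' {c₁,c₂} ⊆ [d]. Then there exists a unique hypergraph Δ_F that is minimal among all hypergraphs Δ' on [d] satisfying: (1) every edge of Δ is contained in some edge of Δ', and (2) no forbidden pair {c₁,c₂} is contained in the intersection of two distinct edges of Δ'. -/
open Finset

def hLE {d : ℕ} (Δ₁ Δ₂ : Finset (Finset (Fin d))) : Prop :=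
  ∀ e ∈ Δ₁, ∃ e' ∈ Δ₂, e ⊆ e'

def IsHypergraph {d : ℕ} (Δ : Finset (Finset (Fin d))) : Prop :=
  ∀ e ∈ Δ, ∀ e' ∈ Δ, e ⊆ e' → e = e'

/-- condition (2): no forbidden pair lies in the intersection of two distinct edges -/
def AvoidsPairs {d : ℕ} (F : Finset (Fin d × Fin d)) (Δ : Finset (Finset (Fin d))) : Prop :=
  ∀ c ∈ F, ∀ e₁ ∈ Δ, ∀ e₂ ∈ Δ, e₁ ≠ e₂ → ¬ ({c.1, c.2} : Finset (Fin d)) ⊆ e₁ ∩ e₂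

private lemma merge_aux {d : ℕ} (Δ : Finset (Finset (Fin d))) (F : Finset (Fin d × Fin d)) :
    ∀ n (Δc : Finset (Finset (Fin d))), Δc.card ≤ n → IsHypergraph Δc → hLE Δ Δc →
      (∀ Δ', IsHypergraph Δ' → hLE Δ Δ' → AvoidsPairs F Δ' → hLE Δc Δ') →
      ∃ ΔF, IsHypergraph ΔF ∧ hLE Δ ΔF ∧ AvoidsPairs F ΔF ∧
        ∀ Δ', IsHypergraph Δ' → hLE Δ Δ' → AvoidsPairs F Δ' → hLE ΔF Δ' := by
  intro n
  induction n with
  | zero =>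
    intro Δc hcard hhyp hle hmin
    have he : Δc = ∅ := Finset.card_eq_zero.mp (Nat.le_zero.mp hcard)
    refine ⟨Δc, hhyp, hle, ?_, hmin⟩
    intro c hc e₁ he₁ _ _ _ _
    simp [he] at he₁
  | succ n ih =>
    intro Δc hcard hhyp hle hmin
    by_cases hA : AvoidsPairs F Δc
    · exact ⟨Δc, hhyp, hle, hA, hmin⟩
    · unfold AvoidsPairs at hA
      push_neg at hA
      obtain ⟨c, hc, e₁, he₁, e₂, he₂, hne, hsub⟩ := hA
      set u := e₁ ∪ e₂ with hu
      set Δn := insert u (Δc.filter (fun f => ¬ f ⊆ u)) with hΔn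
      have hmemn : ∀ f ∈ Δn, f = u ∨ (f ∈ Δc ∧ ¬ f ⊆ u) := by
        intro f hf
        rcases Finset.mem_insert.mp hf with h | h
        · exact Or.inl h
        · exact Or.inr (Finset.mem_filter.mp h)
      -- no edge of Δc strictly contains u
      have hnotsup : ∀ f ∈ Δc, u ⊆ f → False := by
        intro f hf hsup
        have h1 : e₁ = f := hhyp e₁ he₁ f hf (subset_trans Finset.subset_union_left hsup)
        have h2 : e₂ = f := hhyp e₂ he₂ f hf (subset_trans Finset.subset_union_right hsup)
        exact hne (h1.trans h2.symm)
      -- new hypergraph property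
      have hhypn : IsHypergraph Δn := by
        intro a ha b hb hab
        rcases hmemn a ha with rfl | ⟨haΔ, hau⟩
        · rcases hmemn b hb with rfl | ⟨hbΔ, hbu⟩
          · rfl
          · exact absurd (hnotsup b hbΔ hab) id
        · rcases hmemn b hb with rfl | ⟨hbΔ, hbu⟩
          · exact absurd hab hau
          · exact hhyp a haΔ b hbΔ hab
      -- hLE Δc Δn
      have hstep : hLE Δc Δn := by
        intro e he
        by_cases h : e ⊆ u
        · exact ⟨u, Finset.mem_insert_self _ _, h⟩
        · exact ⟨e, Finset.mem_insert_of_mem (Finset.mem_filter.mpr ⟨he, h⟩), subset_refl e⟩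
      have hlen : hLE Δ Δn := by
        intro e he
        obtain ⟨f, hf, hef⟩ := hle e he
        obtain ⟨g, hg, hfg⟩ := hstep f hf
        exact ⟨g, hg, subset_trans hef hfg⟩
      -- minimality
      have hminn : ∀ Δ', IsHypergraph Δ' → hLE Δ Δ' → AvoidsPairs F Δ' → hLE Δn Δ' := by
        intro Δ' h1 h2 h3
        have hm := hmin Δ' h1 h2 h3
        intro f hf
        rcases hmemn f hf with rfl | ⟨hfΔ, _⟩
        · obtain ⟨f₁, hf₁, hs₁⟩ := hm e₁ he₁
          obtain ⟨f₂, hf₂, hs₂⟩ := hm e₂ he₂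
          have heq : f₁ = f₂ := by
            by_contra hneq
            exact h3 c hc f₁ hf₁ f₂ hf₂ hneq
              (subset_trans hsub (Finset.inter_subset_inter hs₁ hs₂))
          refine ⟨f₁, hf₁, ?_⟩
          rw [hu]
          exact Finset.union_subset hs₁ (heq ▸ hs₂)
        · exact hm f hfΔ
      -- card decreases
      have hcardn : Δn.card ≤ n := by
        have hsub2 : Δc.filter (fun f => ¬ f ⊆ u) ⊆ (Δc.erase e₁).erase e₂ := by
          intro f hf
          obtain ⟨hfΔ, hfu⟩ := Finset.mem_filter.mp hf
          have h1 : f ≠ e₁ := fun h => hfu (h ▸ (Finset.subset_union_left : e₁ ⊆ u))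
          have h2 : f ≠ e₂ := fun h => hfu (h ▸ (Finset.subset_union_right : e₂ ⊆ u))
          exact Finset.mem_erase.mpr ⟨h2, Finset.mem_erase.mpr ⟨h1, hfΔ⟩⟩
        have h2 : ((Δc.erase e₁).erase e₂).card + 2 ≤ Δc.card := by
          have he₂' : e₂ ∈ Δc.erase e₁ := Finset.mem_erase.mpr ⟨fun h => hne h.symm, he₂⟩
          have := Finset.card_erase_of_mem he₂'
          have := Finset.card_erase_of_mem he₁
          have hpos : 1 ≤ (Δc.erase e₁).card := Finset.card_pos.mpr ⟨e₂, he₂'⟩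
          have hpos2 : 1 ≤ Δc.card := Finset.card_pos.mpr ⟨e₁, he₁⟩
          omega
        have h3 : Δn.card ≤ (Δc.filter (fun f => ¬ f ⊆ u)).card + 1 :=
          Finset.card_insert_le _ _
        have h4 := Finset.card_le_card hsub2
        omega
      exact ih Δn hcardn hhypn hlen hminn

theorem stmt0 {d : ℕ} (Δ : Finset (Finset (Fin d))) (hΔ : IsHypergraph Δ)
    (h3 : ∀ e ∈ Δ, 3 ≤ e.card) (F : Finset (Fin d × Fin d)) :
    ∃! ΔF : Finset (Finset (Fin d)), IsHypergraph ΔF ∧ hLE Δ ΔF ∧ AvoidsPairs F ΔF ∧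
      ∀ Δ' : Finset (Finset (Fin d)), IsHypergraph Δ' → hLE Δ Δ' → AvoidsPairs F Δ' →
        hLE ΔF Δ' := by
  obtain ⟨ΔF, h1, h2, h4, h5⟩ := merge_aux Δ F Δ.card Δ le_rfl hΔ
    (fun e he => ⟨e, he, subset_refl e⟩)
    (fun Δ' _ hle _ => hle)
  refine ⟨ΔF, ⟨h1, h2, h4, h5⟩, ?_⟩
  rintro Δ' ⟨h1', h2', h4', h5'⟩
  have hab : hLE Δ' ΔF := h5' ΔF h1 h2 h4
  have hba : hLE ΔF Δ' := h5 Δ' h1' h2' h4'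
  -- two antichains below each other are equal
  apply Finset.ext
  intro e
  constructor
  · intro he
    obtain ⟨f, hf, hef⟩ := hab e he
    obtain ⟨g, hg, hfg⟩ := hba f hf
    have : e = g := h1' e he g hg (subset_trans hef hfg)
    have : e = f := Finset.Subset.antisymm hef (this ▸ hfg)
    exact this ▸ hf
  · intro he
    obtain ⟨f, hf, hef⟩ := hba e he
    obtain ⟨g, hg, hfg⟩ := hab f hf
    have : e = g := h1 e he g hg (subset_trans hef hfg)
    have : e = f := Finset.Subset.antisymm hef (this ▸ hfg)
    exact this ▸ hf
end

section
/- Let Δ be a hypergraph on [d] all of whose edges have size at least 3. Then there exists a unique point-line configuration N on ground set [d] (i.e., a simple matroid of rank at most 3, equivalently a collection of 'lines' each of size ≥ 3 with pairwise intersections of size ≤ 1) that is minimal with respect to the property that every edge of Δ is contained in some line of N. -/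
open Finset

/-- A point-line configuration on `[d]`, given by its set of lines: every line has at
least 3 points, and two distinct lines meet in at most one point. -/
def IsPLC {d : ℕ} (L : Finset (Finset (Fin d))) : Prop :=
  (∀ l ∈ L, 3 ≤ l.card) ∧ ∀ l ∈ L, ∀ l' ∈ L, l ≠ l' → (l ∩ l').card ≤ 1

lemma key {d : ℕ} (Δ : Finset (Finset (Fin d))) :
    ∀ n (S : Finset (Finset (Fin d))), S.card = n →
      (∀ l ∈ S, 3 ≤ l.card) → hLE Δ S →
      (∀ N', IsPLC N' → hLE Δ N' → hLE S N') →
      ∃ N, IsPLC N ∧ hLE Δ N ∧ ∀ N', IsPLC N' → hLE Δ N' → hLE N N' := by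
  intro n
  induction n using Nat.strong_induction_on with
  | _ n ih =>
    intro S hcard h3 hcov hmin
    by_cases hplc : ∀ l ∈ S, ∀ l' ∈ S, l ≠ l' → (l ∩ l').card ≤ 1
    · exact ⟨S, ⟨h3, hplc⟩, hcov, hmin⟩
    · push_neg at hplc
      obtain ⟨l, hl, l', hl', hne, hgt⟩ := hplc
      set S' := insert (l ∪ l') ((S.erase l).erase l') with hS'
      have hl'e : l' ∈ S.erase l := mem_erase.2 ⟨hne.symm, hl'⟩
      have h2S : 1 < S.card := one_lt_card.2 ⟨l, hl, l', hl', hne⟩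
      have hcard' : S'.card < S.card := by
        have h1 : (S.erase l).card = S.card - 1 := card_erase_of_mem hl
        have h2 : ((S.erase l).erase l').card = S.card - 1 - 1 := by
          rw [card_erase_of_mem hl'e, h1]
        calc S'.card ≤ ((S.erase l).erase l').card + 1 := card_insert_le _ _
          _ = S.card - 1 - 1 + 1 := by rw [h2]
          _ < S.card := by omega
      have h3' : ∀ m ∈ S', 3 ≤ m.card := by
        intro m hm
        rcases mem_insert.1 hm with rfl | hm
        · exact le_trans (h3 l hl) (card_le_card subset_union_left)
        · exact h3 m (mem_of_mem_erase (mem_of_mem_erase hm))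
      have hcov' : hLE Δ S' := by
        intro e he
        obtain ⟨e', he', hsub⟩ := hcov e he
        by_cases h1 : e' = l
        · exact ⟨l ∪ l', mem_insert_self _ _, h1 ▸ hsub.trans subset_union_left⟩
        by_cases h2 : e' = l'
        · exact ⟨l ∪ l', mem_insert_self _ _, h2 ▸ hsub.trans subset_union_right⟩
        · exact ⟨e', mem_insert_of_mem (mem_erase.2 ⟨h2, mem_erase.2 ⟨h1, he'⟩⟩), hsub⟩
      have hmin' : ∀ N', IsPLC N' → hLE Δ N' → hLE S' N' := by
        intro N' hN' hcN'
        have h := hmin N' hN' hcN'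
        intro m hm
        rcases mem_insert.1 hm with rfl | hm
        · obtain ⟨m1, hm1, hs1⟩ := h l hl
          obtain ⟨m2, hm2, hs2⟩ := h l' hl'
          have hmeq : m1 = m2 := by
            by_contra hne'
            have := hN'.2 m1 hm1 m2 hm2 hne'
            have hle : (l ∩ l').card ≤ (m1 ∩ m2).card :=
              card_le_card (inter_subset_inter hs1 hs2)
            omega
          exact ⟨m1, hm1, union_subset hs1 (hmeq ▸ hs2)⟩
        · exact h m (mem_of_mem_erase (mem_of_mem_erase hm))
      exact ih S'.card (hcard ▸ hcard') S' rfl h3' hcov' hmin'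

theorem stmt1 {d : ℕ} (Δ : Finset (Finset (Fin d))) (hΔ : IsHypergraph Δ)
    (h3 : ∀ e ∈ Δ, 3 ≤ e.card) :
    ∃! N : Finset (Finset (Fin d)), IsPLC N ∧ hLE Δ N ∧
      ∀ N' : Finset (Finset (Fin d)), IsPLC N' → hLE Δ N' → hLE N N' := by
  obtain ⟨N, hN, hcov, hmin⟩ :=
    key Δ Δ.card Δ rfl h3 (fun e he => ⟨e, he, subset_rfl⟩) (fun N' _ hc => hc)
  refine ⟨N, ⟨hN, hcov, hmin⟩, ?_⟩
  rintro M ⟨hM, hcM, hminM⟩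
  have h1 : hLE M N := hminM N hN hcov
  have h2 : hLE N M := hmin M hM hcM
  have subMN : ∀ (A B : Finset (Finset (Fin d))), IsPLC A → hLE A B → hLE B A → A ⊆ B := by
    intro A B hA hAB hBA
    intro a ha
    obtain ⟨b, hb, hab⟩ := hAB a ha
    obtain ⟨a', ha', hba⟩ := hBA b hb
    have haa' : a = a' := by
      by_contra hne
      have hple := hA.2 a ha a' ha' hne
      have : a ∩ a' = a := inter_eq_left.2 (hab.trans hba)
      have h3a := hA.1 a ha
      rw [this] at hple
      omega
    have : a = b := subset_antisymm hab (haa' ▸ hba)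
    exact this ▸ hb
  exact subset_antisymm (subMN M N hM h1 h2) (subMN N M hN h2 h1)
end

section
/- Let M be a matroid on a finite ground set E. Then the circuit variety of M equals the union of the matroid variety of M together with the circuit varieties of all minimal matroids strictly above M in the dependency order: V_{C(M)} = V_M ∪ ⋃_{N ∈ min(M)} V_{C(N)}. -/
open MvPolynomial

/-- The vector of point `i` in a tuple `x ∈ ℂ^{n d}`. -/
def vecs {d n : ℕ} (x : Fin d × Fin n → ℂ) (i : Fin d) : Fin n → ℂ := fun j => x (i, j)

/-- Zariski closure of a subset of affine space. -/
def zarClosure {ι : Type} (S : Set (ι → ℂ)) : Set (ι → ℂ) :=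
  {x | ∀ f : MvPolynomial ι ℂ, (∀ y ∈ S, eval y f = 0) → eval x f = 0}

/-- `x` is a realization of the matroid `M`: linear dependencies match dependent sets. -/
def IsRealization {d n : ℕ} (M : Matroid (Fin d)) (x : Fin d × Fin n → ℂ) : Prop :=
  ∀ S : Set (Fin d), LinearIndependent ℂ (fun i : S => vecs x i.1) ↔ M.Indep S

/-- The realization space `Γ_M`. -/
def realSpace {d : ℕ} (n : ℕ) (M : Matroid (Fin d)) : Set (Fin d × Fin n → ℂ) :=
  {x | IsRealization M x}

/-- The matroid variety `V_M`. -/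
def matroidVariety {d : ℕ} (n : ℕ) (M : Matroid (Fin d)) : Set (Fin d × Fin n → ℂ) :=
  zarClosure (realSpace n M)

/-- The circuit variety `V_{C(M)}`: every dependent set of `M` indexes linearly
dependent vectors. -/
def circuitVariety {d : ℕ} (n : ℕ) (M : Matroid (Fin d)) : Set (Fin d × Fin n → ℂ) :=
  {x | ∀ S : Set (Fin d), M.Dep S → ¬ LinearIndependent ℂ (fun i : S => vecs x i.1)}

/-- Dependency order on matroids: every dependent set of `M` is dependent in `N`. -/
def depLE {d : ℕ} (M N : Matroid (Fin d)) : Prop :=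
  ∀ S : Set (Fin d), M.Dep S → N.Dep S

def depLT {d : ℕ} (M N : Matroid (Fin d)) : Prop :=
  depLE M N ∧ ¬ depLE N M

/-- `N` is a minimal matroid of `M`: a minimal element of `{N : N > M}` in the
dependency order (among matroids on the full ground set `[d]`). -/
def IsMinimalMatroid {d : ℕ} (M N : Matroid (Fin d)) : Prop :=
  N.E = Set.univ ∧ depLT M N ∧
    ∀ N' : Matroid (Fin d), N'.E = Set.univ → depLT M N' → depLE N' N → depLE N N'

/-!
A tuple `x` lies in `V_{C(M)}` exactly when `M` is below the matroid `L` of linear dependencies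
of the vectors of `x` in the dependency order. If `L = M`, then `x` realizes `M`; otherwise, since
there are only finitely many matroids on `[d]`, some minimal matroid `N > M` lies below `L`, and
then `x ∈ V_{C(N)}`. Conversely, `V_M ⊆ V_{C(M)}` because linear dependence of a fixed set of
vectors is a Zariski-closed condition: if the coordinate matrix `A x` of an independent family
has a right inverse `B`, then `det (A y * B)` is a polynomial in `y` that does not vanish at `x`
but vanishes wherever the family is dependent.
-/

section LinearMatroid

variable {ι K V : Type*} [Field K] [AddCommGroup V] [Module K V]

theorem LinearIndepOn.exists_insert_of_encard_lt {v : ι → V} {I J : Set ι}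
    (hI : LinearIndepOn K v I) (hJ : LinearIndepOn K v J) (hIJ : I.encard < J.encard) :
    ∃ e ∈ J, e ∉ I ∧ LinearIndepOn K v (insert e I) := by
  by_contra! h
  have hspan : Submodule.span K (v '' J) ≤ Submodule.span K (v '' I) := by
    refine Submodule.span_le.mpr ?_
    rintro _ ⟨e, he, rfl⟩
    by_cases heI : e ∈ I
    · exact Submodule.subset_span ⟨e, heI, rfl⟩
    · by_contra hv
      exact h e he heI ((linearIndepOn_insert heI).mpr ⟨hI, hv⟩)
  have hle : J.encard ≤ I.encard := by
    rw [← toENat_rank_span_set hI, ← toENat_rank_span_set hJ]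
    exact Cardinal.toENat.monotone' (Submodule.rank_mono hspan)
  exact (hle.trans_lt hIJ).false

variable (K) [Finite ι]

noncomputable def linearMatroid (v : ι → V) : Matroid ι :=
  (IndepMatroid.ofBddAugment Set.univ (fun I => LinearIndepOn K v I) (linearIndepOn_empty K v)
    (fun _ _ hJ hIJ => hJ.mono hIJ)
    (fun _ _ hI hJ hIJ => hI.exists_insert_of_encard_lt hJ hIJ)
    ⟨Nat.card ι, fun I _ => by
      simpa [ENat.card_eq_coe_natCard] using Set.encard_le_card (s := I)⟩
    (fun I _ => Set.subset_univ I)).matroid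

@[simp]
theorem linearMatroid_indep (v : ι → V) (I : Set ι) :
    (linearMatroid K v).Indep I ↔ LinearIndepOn K v I := Iff.rfl

@[simp]
theorem linearMatroid_ground (v : ι → V) : (linearMatroid K v).E = Set.univ := rfl

end LinearMatroid

theorem Matrix.exists_mul_eq_one_of_linearIndependent_rows {m n K : Type*} [Field K]
    [Fintype m] [DecidableEq m] [Fintype n] {A : Matrix m n K}
    (hA : LinearIndependent K A.row) : ∃ B : Matrix n m K, A * B = 1 := by
  refine Matrix.mulVec_surjective_iff_exists_right_inverse.mp ?_
  have htop : LinearMap.range A.mulVecLin = ⊤ := by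
    apply Submodule.eq_top_of_finrank_eq
    rw [Module.finrank_fintype_fun_eq_card]
    exact hA.rank_matrix
  exact LinearMap.range_eq_top.mp htop

theorem not_linearIndependent_rows_of_mem_zarClosure {ι m n : Type} [Fintype m] [Fintype n]
    (F : Matrix m n (MvPolynomial ι ℂ)) {T : Set (ι → ℂ)}
    (hT : ∀ y ∈ T, ¬ LinearIndependent ℂ (F.map (eval y)).row) {x : ι → ℂ}
    (hx : x ∈ zarClosure T) : ¬ LinearIndependent ℂ (F.map (eval x)).row := by
  classical
  intro hxF
  obtain ⟨B, hB⟩ := Matrix.exists_mul_eq_one_of_linearIndependent_rows hxF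
  let P : MvPolynomial ι ℂ := (Matrix.of fun a b => ∑ j, F a j * C (B j b)).det
  have hP : ∀ y, eval y P = (F.map (eval y) * B).det := by
    intro y
    rw [RingHom.map_det]
    congr 1
    ext a b
    simp [Matrix.mul_apply]
  have hPT : ∀ y ∈ T, eval y P = 0 := by
    intro y hy
    rw [hP]
    by_contra hdet
    have hrows : LinearIndependent ℂ (F.map (eval y) * B).row :=
      Matrix.linearIndependent_rows_iff_isUnit.mpr ((Matrix.isUnit_iff_isUnit_det _).mpr
        (isUnit_iff_ne_zero.mpr hdet))
    exact hT y hy (hrows.of_comp (Matrix.vecMulLinear B))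
  simpa [hP, hB] using hx _ hPT

theorem matroidVariety_subset_circuitVariety {d : ℕ} (n : ℕ) (M : Matroid (Fin d)) :
    matroidVariety n M ⊆ circuitVariety n M := by
  classical
  intro x hx S hS
  let F : Matrix S (Fin n) (MvPolynomial (Fin d × Fin n) ℂ) := Matrix.of fun s j => X (s.1, j)
  have hF : ∀ y, (F.map (eval y)).row = fun s : S => vecs y s := by
    intro y
    ext s j
    simp [F, vecs, Matrix.row]
  have hT : ∀ y ∈ realSpace n M, ¬ LinearIndependent ℂ (F.map (eval y)).row := by
    intro y hy hyS
    rw [hF] at hyS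
    exact hS.not_indep ((hy S).mp hyS)
  simpa [hF] using not_linearIndependent_rows_of_mem_zarClosure F hT hx

theorem depLE.trans {d : ℕ} {M N P : Matroid (Fin d)} (hMN : depLE M N) (hNP : depLE N P) :
    depLE M P :=
  fun S hS => hNP S (hMN S hS)

theorem depLE_antisymm {d : ℕ} {M N : Matroid (Fin d)} (hM : M.E = Set.univ)
    (hN : N.E = Set.univ) (hMN : depLE M N) (hNM : depLE N M) : M = N := by
  refine Matroid.ext_indep (hM.trans hN.symm) fun I _ => ?_
  rw [← not_iff_not]
  constructor
  · exact fun hI => (hMN I ⟨hI, hM ▸ Set.subset_univ I⟩).not_indep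
  · exact fun hI => (hNM I ⟨hI, hN ▸ Set.subset_univ I⟩).not_indep

theorem exists_isMinimalMatroid_depLE {d : ℕ} {M N : Matroid (Fin d)} (hN : N.E = Set.univ)
    (hMN : depLT M N) : ∃ P, IsMinimalMatroid M P ∧ depLE P N := by
  obtain ⟨P, ⟨hPE, hMP, hPN⟩, hmin⟩ := Set.Finite.exists_minimalFor' (fun P => {S | P.Dep S})
    {P : Matroid (Fin d) | P.E = Set.univ ∧ depLT M P ∧ depLE P N} (Set.toFinite _)
    ⟨N, hN, hMN, fun _ => id⟩
  exact ⟨P, ⟨hPE, hMP, fun Q hQE hMQ hQP => hmin ⟨hQE, hMQ, hQP.trans hPN⟩ hQP⟩, hPN⟩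

theorem mem_circuitVariety_iff_depLE {d n : ℕ} {M : Matroid (Fin d)} {x : Fin d × Fin n → ℂ} :
    x ∈ circuitVariety n M ↔ depLE M (linearMatroid ℂ (vecs x)) := by
  refine forall_congr' fun S => imp_congr_right fun _ => ?_
  rw [Matroid.Dep, linearMatroid_indep, linearMatroid_ground]
  exact (and_iff_left (Set.subset_univ S)).symm

theorem circuitVariety_anti {d : ℕ} (n : ℕ) {M N : Matroid (Fin d)} (h : depLE M N) :
    circuitVariety n N ⊆ circuitVariety n M :=
  fun _ hx => mem_circuitVariety_iff_depLE.mpr (h.trans (mem_circuitVariety_iff_depLE.mp hx))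

theorem stmt2_general {d n : ℕ} (M : Matroid (Fin d)) (hE : M.E = Set.univ) :
    circuitVariety n M =
      matroidVariety n M ∪ ⋃ N ∈ {N : Matroid (Fin d) | IsMinimalMatroid M N},
        circuitVariety n N := by
  refine Set.Subset.antisymm (fun x hx => ?_) (Set.union_subset
    (matroidVariety_subset_circuitVariety n M)
    (Set.iUnion₂_subset fun N hN => circuitVariety_anti n hN.2.1.1))
  set L := linearMatroid ℂ (vecs x)
  have hML : depLE M L := mem_circuitVariety_iff_depLE.mp hx
  by_cases hLM : depLE L M
  · left
    have hreal : x ∈ realSpace n M := by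
      rw [depLE_antisymm hE (linearMatroid_ground ℂ _) hML hLM]
      exact fun S => (linearMatroid_indep ℂ _ S).symm
    exact fun f hf => hf x hreal
  · right
    obtain ⟨P, hP, hPL⟩ := exists_isMinimalMatroid_depLE (linearMatroid_ground ℂ _) ⟨hML, hLM⟩
    exact Set.mem_biUnion hP (mem_circuitVariety_iff_depLE.mpr hPL)

theorem stmt2 {d n : ℕ} (M : Matroid (Fin d)) (hE : M.E = Set.univ)
    (hrank : ∃ B : Set (Fin d), M.IsBase B ∧ B.ncard = n) :
    circuitVariety n M =
      matroidVariety n M ∪ ⋃ N ∈ {N : Matroid (Fin d) | IsMinimalMatroid M N},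
        circuitVariety n N :=
  stmt2_general M hE
end

section
/- Let 𝒳 be a collection of subsets of a finite set [d]. The function v_𝒳 : 2^[d] → ℤ obtained by the iterative refinement procedure from val_𝒳 is well-defined: it does not depend on the choice of subsets made at each refinement step. -/
open Finset

variable {d : ℕ}

/-- A proper 𝒳-sequence: a list of members of 𝒳, each not contained in the union
of the preceding ones. -/
def ProperSeq (𝒳 : Finset (Finset (Fin d))) (l : List (Finset (Fin d))) : Prop :=
  (∀ x ∈ l, x ∈ 𝒳) ∧ ∀ (i : ℕ) (hi : i < l.length), 1 ≤ i →
    ¬ l.get ⟨i, hi⟩ ⊆ (l.take i).foldr (· ∪ ·) ∅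

/-- `val(F, S) = |F ∪ X₁ ∪ ⋯ ∪ X_k| − k`. -/
def seqVal (F : Finset (Fin d)) (l : List (Finset (Fin d))) : ℤ :=
  ((F ∪ l.foldr (· ∪ ·) ∅).card : ℤ) - l.length

/-- `val_𝒳(F)`: the minimum of `val(F,S)` over proper 𝒳-sequences `S`. -/
noncomputable def valX (𝒳 : Finset (Finset (Fin d))) (F : Finset (Fin d)) : ℤ :=
  sInf {v : ℤ | ∃ l : List (Finset (Fin d)), ProperSeq 𝒳 l ∧ v = seqVal F l}

/-- Condition (i) applies to `v`. -/
def Cond1 (𝒳 : Finset (Finset (Fin d))) (v : Finset (Fin d) → ℤ) : Prop :=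
  ∃ A B x : Finset (Fin d), x ∈ 𝒳 ∧ A ∩ B ⊆ x ∧
    v (A ∪ B) > v A + v B - min ((A ∩ B).card : ℤ) ((x.card : ℤ) - 1)

/-- Condition (ii) applies to `v`. -/
def Cond2 (v : Finset (Fin d) → ℤ) : Prop :=
  ∃ A B : Finset (Fin d), A ⊂ B ∧ v A > v B

/-- Condition (iii) applies to `v`. -/
def Cond3 (v : Finset (Fin d) → ℤ) : Prop :=
  ∃ A B : Finset (Fin d), B ⊂ A ∧ v A > v B + ((A \ B).card : ℤ)

/-- One refinement step of the procedure (with the stated priorities). -/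
def RefStep (𝒳 : Finset (Finset (Fin d))) (v w : Finset (Fin d) → ℤ) : Prop :=
  (∃ A B x : Finset (Fin d), x ∈ 𝒳 ∧ A ∩ B ⊆ x ∧
      v (A ∪ B) > v A + v B - min ((A ∩ B).card : ℤ) ((x.card : ℤ) - 1) ∧
      w = Function.update v (A ∪ B)
        (v A + v B - min ((A ∩ B).card : ℤ) ((x.card : ℤ) - 1))) ∨
  (¬ Cond1 𝒳 v ∧ ∃ A B : Finset (Fin d), A ⊂ B ∧ v A > v B ∧
      w = Function.update v A (v B)) ∨
  (¬ Cond1 𝒳 v ∧ ¬ Cond2 v ∧ ∃ A B : Finset (Fin d), B ⊂ A ∧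
      v A > v B + ((A \ B).card : ℤ) ∧
      w = Function.update v A (v B + ((A \ B).card : ℤ)))

/-- `v` is stable: no refinement step applies. -/
def Stable (𝒳 : Finset (Finset (Fin d))) (v : Finset (Fin d) → ℤ) : Prop :=
  ¬ Cond1 𝒳 v ∧ ¬ Cond2 v ∧ ¬ Cond3 v

/-- `v` is an outcome of the refinement procedure started at `val_𝒳`. -/
def IsRefinedVal (𝒳 : Finset (Finset (Fin d))) (v : Finset (Fin d) → ℤ) : Prop :=
  Relation.ReflTransGen (RefStep 𝒳) (valX 𝒳) v ∧ Stable 𝒳 v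


lemma refStep_le {𝒳 : Finset (Finset (Fin d))} {u u' : Finset (Fin d) → ℤ}
    (h : RefStep 𝒳 u u') : ∀ F, u' F ≤ u F := by
  intro F
  rcases h with ⟨A, B, x, _, _, hgt, rfl⟩ | ⟨-, A, B, _, hgt, rfl⟩ |
    ⟨-, -, A, B, _, hgt, rfl⟩ <;>
  · rw [Function.update_apply]
    split
    · next h => rw [h]; omega
    · exact le_refl _

lemma dominated_step {𝒳 : Finset (Finset (Fin d))} {w u u' : Finset (Fin d) → ℤ}
    (hw : Stable 𝒳 w) (hle : ∀ F, w F ≤ u F) (h : RefStep 𝒳 u u') :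
    ∀ F, w F ≤ u' F := by
  intro F
  obtain ⟨h1, h2, h3⟩ := hw
  rcases h with ⟨A, B, x, hx, hAB, hgt, rfl⟩ | ⟨-, A, B, hAB, hgt, rfl⟩ |
    ⟨-, -, A, B, hAB, hgt, rfl⟩
  · rw [Function.update_apply]
    split
    · next hF =>
      rw [hF]
      have hw1 : ¬ (w (A ∪ B) > w A + w B - min ((A ∩ B).card : ℤ) ((x.card : ℤ) - 1)) :=
        fun hc => h1 ⟨A, B, x, hx, hAB, hc⟩
      have := hle A; have := hle B; omega
    · exact hle F
  · rw [Function.update_apply]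
    split
    · next hF =>
      rw [hF]
      have hw2 : ¬ (w A > w B) := fun hc => h2 ⟨A, B, hAB, hc⟩
      have := hle B; omega
    · exact hle F
  · rw [Function.update_apply]
    split
    · next hF =>
      rw [hF]
      have hw3 : ¬ (w A > w B + ((A \ B).card : ℤ)) := fun hc => h3 ⟨A, B, hAB, hc⟩
      have := hle B; omega
    · exact hle F

lemma dominated_rt {𝒳 : Finset (Finset (Fin d))} {w u u' : Finset (Fin d) → ℤ}
    (hw : Stable 𝒳 w) (h : Relation.ReflTransGen (RefStep 𝒳) u u')
    (hle : ∀ F, w F ≤ u F) : ∀ F, w F ≤ u' F := by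
  induction h with
  | refl => exact hle
  | tail _ hstep ih => exact dominated_step hw ih hstep

lemma rt_le {𝒳 : Finset (Finset (Fin d))} {u u' : Finset (Fin d) → ℤ}
    (h : Relation.ReflTransGen (RefStep 𝒳) u u') : ∀ F, u' F ≤ u F := by
  induction h with
  | refl => exact fun F => le_refl _
  | tail _ hstep ih => exact fun F => (refStep_le hstep F).trans (ih F)

/-- The refined valuation `v_𝒳` is well-defined: any two outcomes of the
refinement procedure coincide. -/
theorem stmt5 (𝒳 : Finset (Finset (Fin d))) (v w : Finset (Fin d) → ℤ)
    (hv : IsRefinedVal 𝒳 v) (hw : IsRefinedVal 𝒳 w) : v = w := by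
  have h1 : ∀ F, w F ≤ v F := dominated_rt hw.2 hv.1 (rt_le hw.1)
  have h2 : ∀ F, v F ≤ w F := dominated_rt hv.2 hw.1 (rt_le hv.1)
  funext F
  exact le_antisymm (h2 F) (h1 F)
end

section
/- Let 𝒳 be a collection of subsets of a finite set [d] and let M be any 𝒳-matroid on [d] (a matroid in which every member of 𝒳 is a circuit). Then for every subset F ⊆ [d], the rank of F in M is at most v_𝒳(F), where v_𝒳 is the refined valuation function. -/
open Finset

variable {d : ℕ}

/-- `C` is a circuit of `M`: a minimal dependent set. -/
def IsCircuitOf (M : Matroid (Fin d)) (C : Set (Fin d)) : Prop :=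
  M.Dep C ∧ ∀ D : Set (Fin d), D ⊂ C → ¬ M.Dep D

/-- An 𝒳-matroid: a matroid (on the full ground set) in which every member of 𝒳
is a circuit. -/
def IsXMatroid (𝒳 : Finset (Finset (Fin d))) (M : Matroid (Fin d)) : Prop :=
  M.E = Set.univ ∧ ∀ x ∈ 𝒳, IsCircuitOf M ↑x

/-! Each refinement rule preserves the pointwise bound `rank ≤ v`: rule (i) by submodularity of
the rank together with `rank(A ∩ B) ≥ min(|A ∩ B|, |x| - 1)` for `A ∩ B` inside the circuit `x`,
rule (ii) by monotonicity, and rule (iii) because adjoining `A \ B` to `B` raises the rank by at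
most `|A \ B|`. The starting function `val_𝒳` is a bound because the last member `X` of a proper
sequence contains an element `e` outside the earlier members, and `e` lies in the closure of
`X \ {e}`: deleting `e` costs one element but no rank, which pays for the `- 1` of `X`. -/

namespace Matroid

variable {α : Type*} {M : Matroid α}

variable (M) in
noncomputable def finsetRk (A : Finset α) : ℕ := (M.eRk A).toNat

variable (M) in
lemma cast_finsetRk (A : Finset α) : (M.finsetRk A : ℕ∞) = M.eRk A :=
  ENat.natCast_toNat <| ne_top_of_le_ne_top (by simp) (M.eRk_le_encard A)

variable (M) in
lemma finsetRk_le_card (A : Finset α) : M.finsetRk A ≤ A.card := by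
  have := M.eRk_le_encard A
  rwa [← M.cast_finsetRk, Set.encard_coe_eq_coe_finsetCard, Nat.cast_le] at this

lemma finsetRk_mono {A B : Finset α} (h : A ⊆ B) : M.finsetRk A ≤ M.finsetRk B := by
  have := M.eRk_mono (Finset.coe_subset.2 h)
  rwa [← M.cast_finsetRk, ← M.cast_finsetRk, Nat.cast_le] at this

lemma Indep.finsetRk_eq_card {I : Finset α} (hI : M.Indep I) : M.finsetRk I = I.card := by
  have := hI.eRk_eq_encard
  rwa [← M.cast_finsetRk, Set.encard_coe_eq_coe_finsetCard, Nat.cast_inj] at this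

lemma Indep.card_le_finsetRk {I A : Finset α} (hI : M.Indep I) (hIA : I ⊆ A) :
    I.card ≤ M.finsetRk A :=
  hI.finsetRk_eq_card ▸ finsetRk_mono hIA

lemma IsCircuit.min_card_le_finsetRk {C S : Finset α} (hC : M.IsCircuit C) (hSC : S ⊆ C) :
    min (S.card : ℤ) (C.card - 1) ≤ M.finsetRk S := by
  rcases hSC.ssubset_or_eq with hSC | rfl
  · rw [(hC.ssubset_indep (Finset.coe_ssubset.2 hSC)).finsetRk_eq_card]
    exact min_le_left _ _
  · have := hC.eRk_add_one_eq
    rw [← M.cast_finsetRk, Set.encard_coe_eq_coe_finsetCard] at this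
    have : M.finsetRk S + 1 = S.card := by exact_mod_cast this
    omega

section DecidableEq

variable [DecidableEq α]

lemma finsetRk_inter_add_finsetRk_union_le (A B : Finset α) :
    M.finsetRk (A ∩ B) + M.finsetRk (A ∪ B) ≤ M.finsetRk A + M.finsetRk B := by
  have := M.eRk_inter_add_eRk_union_le A B
  rwa [← Finset.coe_inter, ← Finset.coe_union, ← M.cast_finsetRk, ← M.cast_finsetRk,
    ← M.cast_finsetRk, ← M.cast_finsetRk, ← Nat.cast_add, ← Nat.cast_add, Nat.cast_le] at this

lemma finsetRk_le_finsetRk_add_card_sdiff (A B : Finset α) :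
    M.finsetRk A ≤ M.finsetRk B + (A \ B).card :=
  calc M.finsetRk A ≤ M.finsetRk (B ∪ (A \ B)) := finsetRk_mono (by simp)
    _ ≤ M.finsetRk B + M.finsetRk (A \ B) := by
      have := finsetRk_inter_add_finsetRk_union_le (M := M) B (A \ B)
      omega
    _ ≤ M.finsetRk B + (A \ B).card := Nat.add_le_add_left (M.finsetRk_le_card _) _

lemma finsetRk_insert_of_mem_closure {A : Finset α} {e : α} (he : e ∈ M.closure A) :
    M.finsetRk (insert e A) = M.finsetRk A := by
  have : M.eRk (insert e A) = M.eRk A := by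
    rw [← eRk_insert_closure_eq, Set.insert_eq_of_mem he, eRk_closure_eq]
  rwa [← Finset.coe_insert, ← M.cast_finsetRk, ← M.cast_finsetRk, Nat.cast_inj] at this

end DecidableEq

variable (M) in
def IsRankUpperBound (w : Finset α → ℤ) : Prop := ∀ A, (M.finsetRk A : ℤ) ≤ w A

namespace IsRankUpperBound

variable {w : Finset α → ℤ}

lemma update [DecidableEq (Finset α)] (hw : M.IsRankUpperBound w) {A : Finset α} {c : ℤ}
    (hc : (M.finsetRk A : ℤ) ≤ c) : M.IsRankUpperBound (Function.update w A c) := by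
  intro B
  rcases eq_or_ne B A with rfl | hBA
  · rwa [Function.update_self]
  · rw [Function.update_of_ne hBA]
    exact hw B

lemma finsetRk_le_of_subset (hw : M.IsRankUpperBound w) {A B : Finset α} (hAB : A ⊆ B) :
    (M.finsetRk A : ℤ) ≤ w B :=
  (Nat.cast_le.2 (finsetRk_mono hAB)).trans (hw B)

variable [DecidableEq α]

lemma finsetRk_union_le (hw : M.IsRankUpperBound w) {A B C : Finset α} (hC : M.IsCircuit C)
    (hABC : A ∩ B ⊆ C) :
    (M.finsetRk (A ∪ B) : ℤ) ≤ w A + w B - min ((A ∩ B).card : ℤ) (C.card - 1) := by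
  have hsubmod : (M.finsetRk (A ∩ B) + M.finsetRk (A ∪ B) : ℤ) ≤
      M.finsetRk A + M.finsetRk B := by
    exact_mod_cast finsetRk_inter_add_finsetRk_union_le A B
  linarith [hC.min_card_le_finsetRk hABC, hw A, hw B]

lemma finsetRk_le_add_card_sdiff (hw : M.IsRankUpperBound w) (A B : Finset α) :
    (M.finsetRk A : ℤ) ≤ w B + (A \ B).card := by
  have : (M.finsetRk A : ℤ) ≤ M.finsetRk B + (A \ B).card := by
    exact_mod_cast finsetRk_le_finsetRk_add_card_sdiff A B
  linarith [hw B]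

end IsRankUpperBound

end Matroid

lemma foldr_union_append_singleton {α : Type*} [DecidableEq α] (l : List (Finset α))
    (x : Finset α) : (l ++ [x]).foldr (· ∪ ·) ∅ = l.foldr (· ∪ ·) ∅ ∪ x := by
  induction l with
  | nil => simp
  | cons y l ih => simp [ih, Finset.union_assoc]

namespace ProperSeq

variable {𝒳 : Finset (Finset (Fin d))} {l : List (Finset (Fin d))}

lemma of_append {l' : List (Finset (Fin d))} (h : ProperSeq 𝒳 (l ++ l')) : ProperSeq 𝒳 l := by
  refine ⟨fun x hx => h.1 x (List.mem_append_left _ hx), fun i hi h1i => ?_⟩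
  have := h.2 i (by rw [List.length_append]; omega) h1i
  simpa [List.take_append_of_le_length hi.le, List.getElem_append_left hi] using this

lemma not_subset_foldr_of_append_singleton {x : Finset (Fin d)} (h : ProperSeq 𝒳 (l ++ [x]))
    (hl : l ≠ []) : ¬ x ⊆ l.foldr (· ∪ ·) ∅ := by
  have := h.2 l.length (by simp) (List.length_pos_iff.2 hl)
  simpa using this

lemma finsetRk_add_length_le {M : Matroid (Fin d)} (h𝒳 : ∀ x ∈ 𝒳, M.IsCircuit ↑x)
    (hl : ProperSeq 𝒳 l) (F : Finset (Fin d)) :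
    M.finsetRk (F ∪ l.foldr (· ∪ ·) ∅) + l.length ≤ (F ∪ l.foldr (· ∪ ·) ∅).card := by
  induction l using List.reverseRecOn generalizing F with
  | nil => simpa using M.finsetRk_le_card F
  | append_singleton l x ih =>
    have hx := h𝒳 x (hl.1 x (by simp))
    obtain ⟨e, hex, hel⟩ : ∃ e ∈ x, e ∉ l.foldr (· ∪ ·) ∅ := by
      rcases eq_or_ne l [] with rfl | hne
      · obtain ⟨e, he⟩ := hx.nonempty
        exact ⟨e, he, by simp⟩
      · exact Finset.not_subset.1 (hl.not_subset_foldr_of_append_singleton hne)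
    rw [foldr_union_append_singleton]
    set W := F ∪ (l.foldr (· ∪ ·) ∅ ∪ x)
    have heW : e ∈ W := by simp [W, hex]
    have hW : (F ∪ x).erase e ∪ l.foldr (· ∪ ·) ∅ = W.erase e := by
      ext a
      by_cases hae : a = e
      · simp [W, hae, hel]
      · simp only [mem_union, mem_erase, ne_eq, hae, not_false_eq_true, true_and, W]
        tauto
    have hrk : M.finsetRk W = M.finsetRk (W.erase e) := by
      conv_lhs => rw [← Finset.insert_erase heW]
      refine Matroid.finsetRk_insert_of_mem_closure
        (M.closure_subset_closure ?_ (hx.mem_closure_sdiff_singleton_of_mem hex))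
      intro a ⟨hax, hae⟩
      simp_all [W]
    have hih := ih hl.of_append ((F ∪ x).erase e)
    rw [hW] at hih
    have := Finset.card_erase_add_one heW
    simp only [List.length_append, List.length_singleton]
    omega

end ProperSeq

lemma IsCircuitOf.isCircuit {M : Matroid (Fin d)} {C : Set (Fin d)} (hC : IsCircuitOf M C) :
    M.IsCircuit C :=
  Matroid.isCircuit_iff.2
    ⟨hC.1, fun D hD hDC => by_contra fun hne => hC.2 D (hDC.ssubset_of_ne hne) hD⟩

section Refinement

variable {𝒳 : Finset (Finset (Fin d))} {M : Matroid (Fin d)}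

lemma isRankUpperBound_valX (h𝒳 : ∀ x ∈ 𝒳, M.IsCircuit ↑x) : M.IsRankUpperBound (valX 𝒳) := by
  intro F
  refine le_csInf ⟨_, [], ⟨by simp, by simp⟩, rfl⟩ ?_
  rintro _ ⟨l, hl, rfl⟩
  have := hl.finsetRk_add_length_le h𝒳 F
  have := Matroid.finsetRk_mono (M := M) (Finset.subset_union_left : F ⊆ F ∪ l.foldr (· ∪ ·) ∅)
  unfold seqVal
  omega

lemma RefStep.isRankUpperBound (h𝒳 : ∀ x ∈ 𝒳, M.IsCircuit ↑x) {v w : Finset (Fin d) → ℤ}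
    (hstep : RefStep 𝒳 v w) (hv : M.IsRankUpperBound v) : M.IsRankUpperBound w := by
  rcases hstep with ⟨A, B, x, hx, hABx, -, rfl⟩ | ⟨-, A, B, hAB, -, rfl⟩ | ⟨-, -, A, B, -, -, rfl⟩
  · exact hv.update (hv.finsetRk_union_le (h𝒳 x hx) hABx)
  · exact hv.update (hv.finsetRk_le_of_subset hAB.subset)
  · exact hv.update (hv.finsetRk_le_add_card_sdiff A B)

end Refinement

/-- For any 𝒳-matroid `M` and any `F ⊆ [d]`, `rank_M(F) ≤ v_𝒳(F)`: every independent
subset of `F` has size at most `v_𝒳(F)`. -/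
theorem stmt6 (𝒳 : Finset (Finset (Fin d))) (M : Matroid (Fin d))
    (hM : IsXMatroid 𝒳 M) (v : Finset (Fin d) → ℤ) (hv : IsRefinedVal 𝒳 v) :
    ∀ F I : Finset (Fin d), I ⊆ F → M.Indep ↑I → (I.card : ℤ) ≤ v F := by
  have h𝒳 : ∀ x ∈ 𝒳, M.IsCircuit ↑x := fun x hx => (hM.2 x hx).isCircuit
  have hrk : M.IsRankUpperBound v := by
    obtain ⟨hreach, -⟩ := hv
    induction hreach with
    | refl => exact isRankUpperBound_valX h𝒳
    | tail _ hstep ih => exact hstep.isRankUpperBound h𝒳 ih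
  intro F I hIF hI
  exact (Nat.cast_le.2 (hI.card_le_finsetRk hIF)).trans (hrk F)
end

section
/- In the Fano plane M_Fano on [7] with lines {1,2,7}... (the seven lines of PG(2,2)), for every triple x of points not contained in a common line, the minimal point-line configuration M^x on [7] containing all lines of M_Fano together with x as dependent (obtained by the merging closure) is the uniform matroid U_{2,7}. -/
open Finset

/-- `N` covers `Δ`: every member of `Δ` is contained in a line of `N`. -/
def Covers {d : ℕ} (Δ N : Finset (Finset (Fin d))) : Prop :=
  ∀ e ∈ Δ, ∃ l ∈ N, e ⊆ l

/-- The lines of the Fano plane on `[7]` (with `7` encoded as `0`). -/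
def FanoLines : Finset (Finset (Fin 7)) :=
  {{1, 2, 3}, {1, 5, 6}, {1, 4, 0}, {2, 5, 0}, {2, 4, 6}, {3, 4, 5}, {3, 6, 0}}

set_option maxRecDepth 10000 in
lemma fanoKey : ∀ x : Finset (Fin 7), x.card = 3 → (∀ l ∈ FanoLines, ¬ x ⊆ l) →
    ∀ S : Finset (Fin 7), x ⊆ S → (∀ L ∈ FanoLines, 2 ≤ (L ∩ S).card → L ⊆ S) →
    S = Finset.univ := by decide

/-- For every triple `x` not contained in a line of the Fano plane, the minimal
point-line configuration `M^x ≥ FanoLines ∪ {x}` is the uniform matroid `U_{2,7}`,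
i.e. the configuration whose single line is all of `[7]`. -/
theorem stmt12 (x : Finset (Fin 7)) (hx : x.card = 3)
    (hxl : ∀ l ∈ FanoLines, ¬ x ⊆ l) :
    IsPLC ({Finset.univ} : Finset (Finset (Fin 7))) ∧
    Covers (insert x FanoLines) {Finset.univ} ∧
    ∀ N : Finset (Finset (Fin 7)), IsPLC N → Covers (insert x FanoLines) N →
      Finset.univ ∈ N := by
  refine ⟨⟨?_, ?_⟩, ?_, ?_⟩
  · intro l hl
    simp only [Finset.mem_singleton] at hl
    subst hl; decide
  · intro l hl l' hl' h
    simp only [Finset.mem_singleton] at hl hl'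
    exact absurd (hl.trans hl'.symm) h
  · intro e _
    exact ⟨Finset.univ, Finset.mem_singleton_self _, Finset.subset_univ e⟩
  · intro N hN hc
    obtain ⟨ℓ, hℓN, hxℓ⟩ := hc x (Finset.mem_insert_self _ _)
    have hclosed : ∀ L ∈ FanoLines, 2 ≤ (L ∩ ℓ).card → L ⊆ ℓ := by
      intro L hL h2
      obtain ⟨ℓ', hℓ'N, hLℓ'⟩ := hc L (Finset.mem_insert_of_mem hL)
      have heq : ℓ = ℓ' := by
        by_contra hne
        have h1 := hN.2 ℓ hℓN ℓ' hℓ'N hne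
        have h3 : 2 ≤ (ℓ ∩ ℓ').card := by
          refine le_trans h2 (Finset.card_le_card ?_)
          intro a ha
          simp only [Finset.mem_inter] at ha ⊢
          exact ⟨ha.2, hLℓ' ha.1⟩
        omega
      rw [heq]; exact hLℓ'
    have hkey : ℓ = Finset.univ := fanoKey x hx hxl ℓ hxℓ hclosed
    rwa [hkey] at hℓN
end

section
/- In the Fano plane M_Fano, every point i ∈ [7] satisfies the three conditions of the loop-minimality criterion, hence M_Fano(i) (the matroid obtained by making i a loop) is a minimal matroid strictly above M_Fano in the dependency order, for every i ∈ [7]. -/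
open Finset

/-- Independent sets of the simple rank-≤3 matroid of a point-line configuration:
sets of at most 3 points, no 3 of which lie on a common line. -/
def plcIndep {d : ℕ} (L : Finset (Finset (Fin d))) (S : Set (Fin d)) : Prop :=
  S.ncard ≤ 3 ∧ (S.ncard = 3 → ¬ ∃ l ∈ L, S ⊆ ↑l)

/-- Three points are collinear if some Fano line contains all of them. -/
abbrev Coll (a b c : Fin 7) : Prop := ∃ l ∈ FanoLines, a ∈ l ∧ b ∈ l ∧ c ∈ l

lemma fact2 : ∀ i j : Fin 7, j ≠ i → ∃ p q : Fin 7,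
    p ≠ q ∧ p ≠ i ∧ q ≠ i ∧ j ≠ p ∧ j ≠ q ∧ Coll i p q ∧ ¬ Coll j p q := by decide

set_option synthInstance.maxSize 400 in
lemma fact3 : ∀ i j k : Fin 7, j ≠ i → k ≠ i → j ≠ k → ¬ Coll i j k →
    ∃ m s : Fin 7, m ≠ i ∧ m ≠ j ∧ m ≠ k ∧ s ≠ i ∧ s ≠ m ∧ s ≠ j ∧ s ≠ k ∧
      Coll j k m ∧ Coll i m s ∧ ¬ Coll s j k := by decide

lemma ncard_triple {a b c : Fin 7} (hab : a ≠ b) (hac : a ≠ c) (hbc : b ≠ c) :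
    ({a, b, c} : Set (Fin 7)).ncard = 3 := by
  rw [Set.ncard_insert_of_notMem (by simp [hab, hac]) (Set.toFinite _), Set.ncard_pair hbc]

lemma plc_pair {a b : Fin 7} (hab : a ≠ b) : plcIndep FanoLines {a, b} := by
  constructor
  · rw [Set.ncard_pair hab]; norm_num
  · rw [Set.ncard_pair hab]; norm_num

lemma plc_triple {a b c : Fin 7} (hab : a ≠ b) (hac : a ≠ c) (hbc : b ≠ c)
    (h : ¬ Coll a b c) : plcIndep FanoLines {a, b, c} := by
  refine ⟨le_of_eq (ncard_triple hab hac hbc), fun _ hl => ?_⟩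
  obtain ⟨l, hlL, hsub⟩ := hl
  exact h ⟨l, hlL, hsub (by simp), hsub (by simp), hsub (by simp)⟩

set_option synthInstance.maxSize 400 in
set_option maxRecDepth 8000 in
theorem stmt14 :
    -- every point of the Fano plane satisfies the three conditions of the criterion,
    (∀ i : Fin 7,
      (∀ j : Fin 7, j ≠ i → ∃ l₁ ∈ FanoLines, ∃ l₂ ∈ FanoLines, i ∈ l₁ ∧ j ∈ l₂ ∧
        ((l₁ ∩ l₂) \ {i, j}).Nonempty) ∧
      (∀ j k : Fin 7, j ≠ i → k ≠ i → j ≠ k →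
        ∃ l ∈ FanoLines, (i ∈ l ∧ j ∈ l) ∨ (i ∈ l ∧ k ∈ l) ∨ (j ∈ l ∧ k ∈ l)) ∧
      (∀ l ∈ FanoLines, ∃ p ∈ l, ∃ l' ∈ FanoLines, i ∈ l' ∧ p ∈ l')) ∧
    -- hence every `M_Fano(i)` is a minimal matroid above `M_Fano`:
    (∀ i : Fin 7, ∀ M Mi : Matroid (Fin 7), M.E = Set.univ → Mi.E = Set.univ →
      (∀ S : Set (Fin 7), M.Indep S ↔ plcIndep FanoLines S) →
      (∀ S : Set (Fin 7), Mi.Indep S ↔ (i ∉ S ∧ plcIndep FanoLines S)) →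
      IsMinimalMatroid M Mi) := by
  constructor
  · decide
  · intro i M Mi hME hMiE hM hMi
    refine ⟨hMiE, ⟨?_, ?_⟩, ?_⟩
    · -- depLE M Mi
      intro S hS
      rw [Matroid.dep_iff] at hS ⊢
      exact ⟨fun hind => hS.1 ((hM S).2 ((hMi S).1 hind).2),
        by rw [hMiE]; exact Set.subset_univ _⟩
    · -- ¬ depLE Mi M
      intro h
      have h1 : Mi.Dep {i} := Matroid.dep_iff.2
        ⟨fun hind => ((hMi _).1 hind).1 rfl, by rw [hMiE]; exact Set.subset_univ _⟩
      have h2 := h _ h1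
      rw [Matroid.dep_iff] at h2
      exact h2.1 ((hM _).2 ⟨by simp, by simp⟩)
    · -- minimality
      intro N' hN'E hMN' hN'Mi
      have hdown : ∀ S, N'.Indep S → plcIndep FanoLines S := by
        intro S hS
        by_contra hplc
        have hdep : M.Dep S := Matroid.dep_iff.2
          ⟨fun h => hplc ((hM S).1 h), by rw [hME]; exact Set.subset_univ _⟩
        exact (Matroid.dep_iff.1 (hMN'.1 S hdep)).1 hS
      have hup : ∀ S, i ∉ S → plcIndep FanoLines S → N'.Indep S := by
        intro S h1 h2
        by_contra hN
        have hd : N'.Dep S := Matroid.dep_iff.2 ⟨hN, by rw [hN'E]; exact Set.subset_univ _⟩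
        exact (Matroid.dep_iff.1 (hN'Mi S hd)).1 ((hMi S).2 ⟨h1, h2⟩)
      obtain ⟨T, hTdep, hTM⟩ : ∃ T, N'.Dep T ∧ ¬ M.Dep T := by
        by_contra h
        push_neg at h
        exact hMN'.2 h
      have hTsub : T ⊆ M.E := by rw [hME]; exact Set.subset_univ _
      have hTplc : plcIndep FanoLines T :=
        (hM T).1 ((Matroid.not_dep_iff (M := M) hTsub).1 hTM)
      have hTN : ¬ N'.Indep T := (Matroid.dep_iff.1 hTdep).1
      have hmain : ∀ S, N'.Indep S → Mi.Indep S := by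
        intro S hS
        rw [hMi]
        refine ⟨fun hiS => ?_, hdown S hS⟩
        have hNi : N'.Indep {i} := hS.subset (Set.singleton_subset_iff.2 hiS)
        -- every pair containing i is N'-independent
        have hpair : ∀ j : Fin 7, j ≠ i → N'.Indep {i, j} := by
          intro j hj
          obtain ⟨p, q, hpq, hpi, hqi, hjp, hjq, hcol, hncol⟩ := fact2 i j hj
          have hpqI : N'.Indep {p, q} :=
            hup _ (by simp [Ne.symm hpi, Ne.symm hqi]) (plc_pair hpq)
          by_contra hdep
          have hdep' : N'.Dep (insert j {i}) := by
            rw [Set.pair_comm i j] at hdep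
            exact Matroid.dep_iff.2 ⟨hdep, by rw [hN'E]; exact Set.subset_univ _⟩
          have hjcl : j ∈ N'.closure {i} := (hNi.insert_dep_iff.1 hdep').1
          have hipq_dep : N'.Dep (insert i {p, q}) := by
            refine Matroid.dep_iff.2 ⟨fun hind => ?_, by rw [hN'E]; exact Set.subset_univ _⟩
            obtain ⟨l, hl, h1, h2, h3⟩ := hcol
            exact (hdown _ hind).2 (ncard_triple (Ne.symm hpi).symm.symm
              (Ne.symm hqi) (hpq)) ⟨l, hl, by simp [Set.insert_subset_iff, h1, h2, h3]⟩
          have hicl : i ∈ N'.closure {p, q} := (hpqI.insert_dep_iff.1 hipq_dep).1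
          have hjcl2 : j ∈ N'.closure {p, q} :=
            N'.closure_subset_closure_of_subset_closure (Set.singleton_subset_iff.2 hicl) hjcl
          have hjpq : N'.Dep (insert j {p, q}) :=
            hpqI.insert_dep_iff.2 ⟨hjcl2, by simp [hjp, hjq]⟩
          exact (Matroid.dep_iff.1 hjpq).1
            (hup _ (by simp [Ne.symm hj, Ne.symm hpi, Ne.symm hqi])
              (plc_triple hjp hjq hpq hncol))
        -- every noncollinear triple containing i is N'-independent
        have htriple : ∀ j k : Fin 7, j ≠ i → k ≠ i → j ≠ k → ¬ Coll i j k →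
            N'.Indep {i, j, k} := by
          intro j k hj hk hjk hnc
          obtain ⟨m, s, hmi, hmj, hmk, hsi, hsm, hsj, hsk, hjkm, hims, hnsjk⟩ :=
            fact3 i j k hj hk hjk hnc
          have hjkI : N'.Indep {j, k} :=
            hup _ (by simp [Ne.symm hj, Ne.symm hk]) (plc_pair hjk)
          by_contra hdep
          have hdep' : N'.Dep (insert i {j, k}) :=
            Matroid.dep_iff.2 ⟨hdep, by rw [hN'E]; exact Set.subset_univ _⟩
          have hicl : i ∈ N'.closure {j, k} := (hjkI.insert_dep_iff.1 hdep').1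
          have hmdep : N'.Dep (insert m {j, k}) := by
            refine Matroid.dep_iff.2 ⟨fun hind => ?_, by rw [hN'E]; exact Set.subset_univ _⟩
            obtain ⟨l, hl, h1, h2, h3⟩ := hjkm
            exact (hdown _ hind).2 (ncard_triple hmj hmk hjk)
              ⟨l, hl, by simp [Set.insert_subset_iff, h1, h2, h3]⟩
          have hmcl : m ∈ N'.closure {j, k} := (hjkI.insert_dep_iff.1 hmdep).1
          have himI : N'.Indep {i, m} := hpair m hmi
          have hsdep : N'.Dep (insert s {i, m}) := by
            refine Matroid.dep_iff.2 ⟨fun hind => ?_, by rw [hN'E]; exact Set.subset_univ _⟩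
            obtain ⟨l, hl, h1, h2, h3⟩ := hims
            exact (hdown _ hind).2 (ncard_triple hsi hsm (Ne.symm hmi))
              ⟨l, hl, by simp [Set.insert_subset_iff, h1, h2, h3]⟩
          have hscl : s ∈ N'.closure {i, m} := (himI.insert_dep_iff.1 hsdep).1
          have hsub : N'.closure {i, m} ⊆ N'.closure {j, k} :=
            N'.closure_subset_closure_of_subset_closure
              (Set.insert_subset_iff.2 ⟨hicl, Set.singleton_subset_iff.2 hmcl⟩)
          have hsjk : N'.Dep (insert s {j, k}) :=
            hjkI.insert_dep_iff.2 ⟨hsub hscl, by simp [hsj, hsk]⟩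
          exact (Matroid.dep_iff.1 hsjk).1
            (hup _ (by simp [Ne.symm hsi, Ne.symm hj, Ne.symm hk])
              (plc_triple hsj hsk hjk hnsjk))
        -- now analyse T
        have hiT : i ∈ T := by
          by_contra h
          exact hTN (hup T h hTplc)
        have hTle : T.ncard ≤ 3 := hTplc.1
        have hfin3 : ∀ x y : Fin 7, x ≠ i → y ≠ i → x ≠ y → T = {i, x, y} → False := by
          intro x y hx hy hxy hT
          have hnc : ¬ Coll i x y := by
            rintro ⟨l, hl, h1, h2, h3⟩
            exact hTplc.2 (by rw [hT]; exact ncard_triple (Ne.symm hx) (Ne.symm hy) hxy)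
              ⟨l, hl, by rw [hT]; simp [Set.insert_subset_iff, h1, h2, h3]⟩
          exact hTN (hT ▸ htriple x y hx hy hxy hnc)
        have h03 : T.ncard = 0 ∨ T.ncard = 1 ∨ T.ncard = 2 ∨ T.ncard = 3 := by omega
        rcases h03 with hn | hn | hn | hn
        · rw [Set.ncard_eq_zero (Set.toFinite T)] at hn
          rw [hn] at hiT
          exact hiT
        · obtain ⟨a, rfl⟩ := Set.ncard_eq_one.1 hn
          have : i = a := by simpa using hiT
          subst this
          exact hTN hNi
        · obtain ⟨a, b, hab, hTeq⟩ := Set.ncard_eq_two.1 hn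
          rw [hTeq] at hiT
          simp only [Set.mem_insert_iff, Set.mem_singleton_iff] at hiT
          rcases hiT with rfl | rfl
          · exact hTN (hTeq ▸ hpair b (Ne.symm hab))
          · refine hTN ?_
            rw [hTeq, Set.pair_comm]
            exact hpair a hab
        · obtain ⟨a, b, c, hab, hac, hbc, hTeq⟩ := Set.ncard_eq_three.1 hn
          rw [hTeq] at hiT
          simp only [Set.mem_insert_iff, Set.mem_singleton_iff] at hiT
          rcases hiT with rfl | rfl | rfl
          · exact hfin3 b c (Ne.symm hab) (Ne.symm hac) hbc hTeq
          · exact hfin3 a c hab (Ne.symm hbc) hac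
              (by rw [hTeq, Set.insert_comm])
          · exact hfin3 a b hac hbc hab
              (by rw [hTeq, Set.pair_comm b, Set.insert_comm])
      intro S hSdep
      refine Matroid.dep_iff.2 ⟨fun hind => ?_, by rw [hN'E]; exact Set.subset_univ _⟩
      exact (Matroid.dep_iff.1 hSdep).1 (hmain S hind)
end
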